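/- Let v, w : ℝ → ℝ be continuous and 2π-periodic. Then |C̃(v) − C̃(w)| ≤ 2√(2π) · (∫₀^{2π} (v(x) − w(x))² dx)^{1/2}. -/

import Mathlib

open Real intervalIntegral

/-- The mean value `f̄ = (1/(2π)) ∫₀^{2π} f(y) dy` of a `2π`-periodic function. -/
noncomputable def fmean (f : ℝ → ℝ) : ℝ := (1 / (2 * π)) * ∫ y in (0:ℝ)..(2 * π), f y

/-- The antiderivative operator `𝒟`, the realization on continuous functions of the
maximal Tseng generalized inverse `∂ₓ†` of the spatial derivative on `𝕊 = ℝ/2πℤ`. -/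
noncomputable def Dop (f : ℝ → ℝ) (x : ℝ) : ℝ :=
  (∫ y in (0:ℝ)..x, (f y - fmean f)) -
    (1 / (2 * π)) * ∫ z in (0:ℝ)..(2 * π), (∫ y in (0:ℝ)..z, (f y - fmean f))

/-- `C̃(v) = ∫₀^{2π} cos(v(x)) ⬝ 𝒟(sin∘v)(x) dx`. -/
noncomputable def Ctilde (v : ℝ → ℝ) : ℝ :=
  ∫ x in (0:ℝ)..(2 * π), Real.cos (v x) * Dop (fun y => Real.sin (v y)) x

/-!
Write `C̃(v) - C̃(w) = ∫ (cos v - cos w) · 𝒟(sin ∘ v) + ∫ cos w · 𝒟(sin ∘ v - sin ∘ w)`.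
Since `𝒟f` is a mean-zero primitive of `f - f̄` taking equal values at `0` and `2π`,
Wirtinger's inequality (via Parseval) gives `‖𝒟f‖₂ ≤ ‖f - f̄‖₂ ≤ ‖f‖₂`. Cauchy–Schwarz, the
`1`-Lipschitz bounds for `sin` and `cos`, and `|sin|, |cos| ≤ 1` then bound each term by
`√(2π) ‖v - w‖₂`.
-/

open Set
open MeasureTheory (MemLp volume)
open scoped Interval

theorem ContinuousOn.memLp_restrict_Ioc {E : Type*} [NormedAddCommGroup E] {f : ℝ → E}
    {a b : ℝ} (hf : ContinuousOn f (Icc a b)) (p : ENNReal) :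
    MemLp f p (volume.restrict (Ioc a b)) := by
  obtain ⟨C, hC⟩ := isCompact_Icc.exists_bound_of_continuousOn hf
  refine MeasureTheory.MemLp.of_bound ((hf.aestronglyMeasurable measurableSet_Icc).mono_measure
    (MeasureTheory.Measure.restrict_mono Ioc_subset_Icc_self le_rfl)) C ?_
  exact (MeasureTheory.ae_restrict_iff' measurableSet_Ioc).2
    (.of_forall fun x hx => hC x (Ioc_subset_Icc_self hx))

theorem fourierCoeffOn_zero {a b : ℝ} (hab : a < b) (f : ℝ → ℂ) :
    fourierCoeffOn hab f 0 = (1 / (b - a)) • ∫ x in a..b, f x := by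
  simp [fourierCoeffOn_eq_integral]

theorem norm_fourierCoeffOn_le_of_hasDerivAt {a b : ℝ} (hab : a < b) {G g : ℝ → ℂ}
    (hG : ∀ x ∈ [[a, b]], HasDerivAt G (g x) x) (hg : IntervalIntegrable g volume a b)
    (hGab : G a = G b) (hmean : ∫ x in a..b, G x = 0) (n : ℤ) :
    ‖fourierCoeffOn hab G n‖ ≤ (b - a) / (2 * π) * ‖fourierCoeffOn hab g n‖ := by
  rcases eq_or_ne n 0 with rfl | hn
  · rw [fourierCoeffOn_zero, hmean, smul_zero, norm_zero]
    have : 0 < b - a := sub_pos.2 hab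
    positivity
  have hn' : (1 : ℝ) ≤ |(n : ℝ)| := by exact_mod_cast Int.one_le_abs hn
  calc ‖fourierCoeffOn hab G n‖
      = (b - a) / (2 * π) * ‖fourierCoeffOn hab g n‖ / |(n : ℝ)| := by
        have hba : ‖(b : ℂ) - a‖ = b - a := by
          rw [← Complex.ofReal_sub, Complex.norm_real, norm_of_nonneg (sub_pos.2 hab).le]
        rw [fourierCoeffOn_of_hasDerivAt hab hn hG hg, hGab, sub_self, mul_zero, zero_sub]
        simp only [norm_mul, norm_neg, norm_div, norm_one, Complex.norm_intCast, Complex.norm_I,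
          Complex.norm_real, Complex.norm_ofNat, norm_eq_abs, abs_of_pos pi_pos, hba]
        ring
    _ ≤ (b - a) / (2 * π) * ‖fourierCoeffOn hab g n‖ :=
        div_le_self (by have := sub_pos.2 hab; positivity) hn'

theorem wirtinger_inequality {a b : ℝ} (hab : a < b) {G g : ℝ → ℂ}
    (hG : ∀ x ∈ [[a, b]], HasDerivAt G (g x) x) (hg : MemLp g 2 (volume.restrict (Ioc a b)))
    (hGab : G a = G b) (hmean : ∫ x in a..b, G x = 0) :
    ∫ x in a..b, ‖G x‖ ^ 2 ≤ ((b - a) / (2 * π)) ^ 2 * ∫ x in a..b, ‖g x‖ ^ 2 := by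
  have hGc : ContinuousOn G (Icc a b) := fun x hx =>
    (hG x (Icc_subset_uIcc hx)).continuousAt.continuousWithinAt
  have hgi : IntervalIntegrable g volume a b :=
    (intervalIntegrable_iff_integrableOn_Ioc_of_le hab.le).2 (hg.integrable one_le_two)
  have hsG := hasSum_sq_fourierCoeffOn hab (hGc.memLp_restrict_Ioc 2)
  have hsg := (hasSum_sq_fourierCoeffOn hab hg).mul_left (((b - a) / (2 * π)) ^ 2)
  have hcoeff := hasSum_le (fun n => by
    rw [← mul_pow]
    exact pow_le_pow_left₀ (norm_nonneg _)
      (norm_fourierCoeffOn_le_of_hasDerivAt hab hG hgi hGab hmean n) 2) hsG hsg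
  rwa [smul_eq_mul, smul_eq_mul, mul_left_comm,
    mul_le_mul_iff_right₀ (inv_pos.2 (sub_pos.2 hab))] at hcoeff

theorem intervalIntegral.abs_integral_mul_le_L2_mul_L2 {a b : ℝ} (hab : a ≤ b) {f g : ℝ → ℝ}
    (hf : MemLp f 2 (volume.restrict (Ioc a b))) (hg : MemLp g 2 (volume.restrict (Ioc a b))) :
    |∫ x in a..b, f x * g x| ≤ √(∫ x in a..b, f x ^ 2) * √(∫ x in a..b, g x ^ 2) := by
  simp only [integral_of_le hab, sqrt_eq_rpow]
  refine MeasureTheory.abs_integral_le_integral_abs.trans ?_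
  have := MeasureTheory.integral_mul_norm_le_Lp_mul_Lq (μ := volume.restrict (Ioc a b))
    Real.HolderConjugate.two_two (by simpa using hf) (by simpa using hg)
  simpa only [abs_mul, norm_eq_abs, rpow_ofNat, sq_abs] using this

theorem intervalIntegral.integral_sq_le_integral_sq_of_abs_le {a b : ℝ} (hab : a ≤ b)
    {f g : ℝ → ℝ} (hf : Continuous f) (hg : Continuous g) (h : ∀ x, |f x| ≤ |g x|) :
    ∫ x in a..b, f x ^ 2 ≤ ∫ x in a..b, g x ^ 2 :=
  integral_mono_on hab ((hf.pow 2).intervalIntegrable _ _) ((hg.pow 2).intervalIntegrable _ _)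
    fun x _ => sq_le_sq.2 (h x)

theorem intervalIntegral.integral_sq_le_of_abs_le_one {a b : ℝ} (hab : a ≤ b) {f : ℝ → ℝ}
    (hf : Continuous f) (h : ∀ x, |f x| ≤ 1) : ∫ x in a..b, f x ^ 2 ≤ b - a := by
  simpa using integral_sq_le_integral_sq_of_abs_le hab hf continuous_const (g := fun _ => 1)
    fun x => by simpa using h x

theorem integral_eq_two_pi_mul_fmean (f : ℝ → ℝ) :
    ∫ x in (0 : ℝ)..2 * π, f x = 2 * π * fmean f := by
  rw [fmean]
  field_simp

theorem fmean_sub {f g : ℝ → ℝ} (hf : IntervalIntegrable f volume 0 (2 * π))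
    (hg : IntervalIntegrable g volume 0 (2 * π)) :
    fmean (fun y => f y - g y) = fmean f - fmean g := by
  simp only [fmean, integral_sub hf hg, mul_sub]

theorem integral_sub_fmean {f : ℝ → ℝ} (hf : IntervalIntegrable f volume 0 (2 * π)) :
    ∫ x in (0 : ℝ)..2 * π, (f x - fmean f) = 0 := by
  rw [integral_sub hf intervalIntegrable_const, integral_const, integral_eq_two_pi_mul_fmean]
  simp

theorem integral_sub_fmean_sq_le {f : ℝ → ℝ} (hf : Continuous f) :
    ∫ x in (0 : ℝ)..2 * π, (f x - fmean f) ^ 2 ≤ ∫ x in (0 : ℝ)..2 * π, f x ^ 2 := by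
  have hexpand : ∫ x in (0 : ℝ)..2 * π, (f x - fmean f) ^ 2
      = (∫ x in (0 : ℝ)..2 * π, f x ^ 2) - 2 * π * fmean f ^ 2 := by
    have hsq : Continuous fun x => f x ^ 2 := by fun_prop
    have hlin : Continuous fun x => 2 * fmean f * f x := by fun_prop
    have hdiff : Continuous fun x => f x ^ 2 - 2 * fmean f * f x := by fun_prop
    simp only [sub_sq, mul_right_comm 2 (f _)]
    rw [integral_add (hdiff.intervalIntegrable _ _) intervalIntegrable_const,
      integral_sub (hsq.intervalIntegrable _ _) (hlin.intervalIntegrable _ _), integral_const_mul,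
      integral_eq_two_pi_mul_fmean f, integral_const, sub_zero, smul_eq_mul]
    ring
  rw [hexpand]
  have := mul_nonneg two_pi_pos.le (sq_nonneg (fmean f))
  linarith

section Dop

variable {f g : ℝ → ℝ}

theorem intervalIntegrable_sub_fmean (hf : Continuous f) (a b : ℝ) :
    IntervalIntegrable (fun y => f y - fmean f) volume a b :=
  (hf.sub continuous_const).intervalIntegrable a b

theorem continuous_primitive_sub_fmean (hf : Continuous f) :
    Continuous fun x => ∫ y in (0 : ℝ)..x, (f y - fmean f) :=
  continuous_primitive (intervalIntegrable_sub_fmean hf) 0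

theorem hasDerivAt_Dop (hf : Continuous f) (x : ℝ) : HasDerivAt (Dop f) (f x - fmean f) x :=
  ((hf.sub continuous_const).integral_hasStrictDerivAt 0 x).hasDerivAt.sub_const _

theorem continuous_Dop (hf : Continuous f) : Continuous (Dop f) :=
  continuous_iff_continuousAt.2 fun x => (hasDerivAt_Dop hf x).continuousAt

theorem Dop_two_pi (hf : Continuous f) : Dop f (2 * π) = Dop f 0 := by
  simp only [Dop, integral_same, integral_sub_fmean (hf.intervalIntegrable _ _)]

theorem integral_Dop (hf : Continuous f) : ∫ x in (0 : ℝ)..2 * π, Dop f x = 0 := by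
  simp only [Dop]
  rw [integral_sub ((continuous_primitive_sub_fmean hf).intervalIntegrable _ _)
    intervalIntegrable_const, integral_const, smul_eq_mul]
  field_simp
  ring

theorem Dop_sub (hf : Continuous f) (hg : Continuous g) (x : ℝ) :
    Dop (fun y => f y - g y) x = Dop f x - Dop g x := by
  have hprim : ∀ t, ∫ y in (0 : ℝ)..t, (f y - g y - fmean fun y => f y - g y)
      = (∫ y in (0 : ℝ)..t, (f y - fmean f)) - ∫ y in (0 : ℝ)..t, (g y - fmean g) := fun t => by
    rw [fmean_sub (hf.intervalIntegrable _ _) (hg.intervalIntegrable _ _),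
      ← integral_sub (intervalIntegrable_sub_fmean hf 0 t) (intervalIntegrable_sub_fmean hg 0 t)]
    congr 1 with y
    ring
  simp only [Dop, hprim]
  rw [integral_sub ((continuous_primitive_sub_fmean hf).intervalIntegrable _ _)
    ((continuous_primitive_sub_fmean hg).intervalIntegrable _ _)]
  ring

theorem integral_Dop_sq_le (hf : Continuous f) :
    ∫ x in (0 : ℝ)..2 * π, Dop f x ^ 2 ≤ ∫ x in (0 : ℝ)..2 * π, f x ^ 2 := by
  have hW := wirtinger_inequality two_pi_pos (G := fun x => (Dop f x : ℂ))
    (g := fun x => ((f x - fmean f : ℝ) : ℂ)) (fun x _ => (hasDerivAt_Dop hf x).ofReal_comp)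
    ((Complex.continuous_ofReal.comp (hf.sub continuous_const)).continuousOn.memLp_restrict_Ioc 2)
    (by rw [Dop_two_pi hf]) (by rw [integral_ofReal, integral_Dop hf, Complex.ofReal_zero])
  simp only [Complex.norm_real, Real.norm_eq_abs, sq_abs, sub_zero] at hW
  rw [div_self two_pi_pos.ne', one_pow, one_mul] at hW
  exact hW.trans (integral_sub_fmean_sq_le hf)

end Dop

theorem abs_integral_mul_Dop_le {a f : ℝ → ℝ} (ha : Continuous a) (hf : Continuous f) :
    |∫ x in (0 : ℝ)..2 * π, a x * Dop f x|
      ≤ √(∫ x in (0 : ℝ)..2 * π, a x ^ 2) * √(∫ x in (0 : ℝ)..2 * π, f x ^ 2) :=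
  (abs_integral_mul_le_L2_mul_L2 two_pi_pos.le (ha.continuousOn.memLp_restrict_Ioc 2)
    ((continuous_Dop hf).continuousOn.memLp_restrict_Ioc 2)).trans
    (by gcongr; exact integral_Dop_sq_le hf)

theorem Ctilde_sub_Ctilde {v w : ℝ → ℝ} (hv : Continuous v) (hw : Continuous w) :
    Ctilde v - Ctilde w
      = (∫ x in (0 : ℝ)..2 * π, (cos (v x) - cos (w x)) * Dop (fun y => sin (v y)) x)
        + ∫ x in (0 : ℝ)..2 * π, cos (w x) * Dop (fun y => sin (v y) - sin (w y)) x := by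
  have hDv := continuous_Dop (f := fun y => sin (v y)) (by fun_prop)
  have hDw := continuous_Dop (f := fun y => sin (w y)) (by fun_prop)
  have hDvw := continuous_Dop (f := fun y => sin (v y) - sin (w y)) (by fun_prop)
  rw [Ctilde, Ctilde, ← integral_add, ← integral_sub]
  · congr 1 with x
    rw [Dop_sub (by fun_prop) (by fun_prop)]
    ring
  all_goals exact Continuous.intervalIntegrable (by fun_prop) _ _

theorem Ctilde_lipschitz_general (v w : ℝ → ℝ)
    (hv : Continuous v)
    (hw : Continuous w) :
    |Ctilde v - Ctilde w| ≤
      2 * Real.sqrt (2 * π) * Real.sqrt (∫ x in (0:ℝ)..(2 * π), (v x - w x) ^ 2) := by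
  have h2π : (0 : ℝ) ≤ 2 * π := two_pi_pos.le
  calc |Ctilde v - Ctilde w|
      ≤ |∫ x in (0 : ℝ)..2 * π, (cos (v x) - cos (w x)) * Dop (fun y => sin (v y)) x|
        + |∫ x in (0 : ℝ)..2 * π, cos (w x) * Dop (fun y => sin (v y) - sin (w y)) x| :=
        Ctilde_sub_Ctilde hv hw ▸ abs_add_le _ _
    _ ≤ √(∫ x in (0 : ℝ)..2 * π, (cos (v x) - cos (w x)) ^ 2)
          * √(∫ x in (0 : ℝ)..2 * π, sin (v x) ^ 2)
        + √(∫ x in (0 : ℝ)..2 * π, cos (w x) ^ 2)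
          * √(∫ x in (0 : ℝ)..2 * π, (sin (v x) - sin (w x)) ^ 2) :=
        add_le_add (abs_integral_mul_Dop_le (by fun_prop) (by fun_prop))
          (abs_integral_mul_Dop_le (by fun_prop) (by fun_prop))
    _ ≤ √(∫ x in (0 : ℝ)..2 * π, (v x - w x) ^ 2) * √(2 * π)
        + √(2 * π) * √(∫ x in (0 : ℝ)..2 * π, (v x - w x) ^ 2) := by
        gcongr √?_ * √?_ + √?_ * √?_
        · exact integral_sq_le_integral_sq_of_abs_le h2π (by fun_prop) (by fun_prop)
            fun x => abs_cos_sub_cos_le (v x) (w x)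
        · simpa using integral_sq_le_of_abs_le_one h2π (by fun_prop) fun x => abs_sin_le_one (v x)
        · simpa using integral_sq_le_of_abs_le_one h2π (by fun_prop) fun x => abs_cos_le_one (w x)
        · exact integral_sq_le_integral_sq_of_abs_le h2π (by fun_prop) (by fun_prop)
            fun x => abs_sin_sub_sin_le (v x) (w x)
    _ = 2 * √(2 * π) * √(∫ x in (0 : ℝ)..2 * π, (v x - w x) ^ 2) := by ring

/-- Lipschitz-type estimate for the functional `C̃`:
`|C̃(v) − C̃(w)| ≤ 2√(2π) ⬝ ‖v − w‖_{L²(0,2π)}`. -/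
theorem Ctilde_lipschitz (v w : ℝ → ℝ)
    (hv : Continuous v) (hvp : Function.Periodic v (2 * π))
    (hw : Continuous w) (hwp : Function.Periodic w (2 * π)) :
    |Ctilde v - Ctilde w| ≤
      2 * Real.sqrt (2 * π) * Real.sqrt (∫ x in (0:ℝ)..(2 * π), (v x - w x) ^ 2) :=
  Ctilde_lipschitz_general v w hv hw
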